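/- Let a : ℤ → ℂ^{r×r} be finitely supported and m ∈ ℕ. Suppose S_a p⃗_m = 2^{-m} p⃗_m for some 1×r vector polynomial p⃗_m of exact degree m. Then the mask a has order m+1 sum rules with respect to any finitely supported υ : ℤ → ℂ^{1×r} satisfying υ̂^{(j)}(0) = j! i^j p⃗_m^{(m−j)}(0) for j = 0,…,m; in particular υ̂(0) = p⃗_m^{(m)}(0) ≠ 0. -/

import Mathlib

/-!
For polynomials `q, p` of degree at most `m`, the pairing `⟨q, p⟩ = ∑ₛ (-1)ˢ q⁽ˢ⁾ p⁽ᵐ⁻ˢ⁾` has a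
telescoping, hence vanishing, derivative, so it is constant. The hypothesis on `υ̂` says that,
componentwise, `∑ₖ υ(k) q(k) = ⟨q, p⟩(0)`; evaluating the pairing instead at the root `-t/2` of
`q = (2X + t)ʲ` gives `∑ₖ υ(k) (2k + t)ʲ = j! (-2)ʲ p⁽ᵐ⁻ʲ⁾(-t/2)`.

Splitting `S_a p = 2⁻ᵐ p` according to the parity of the argument gives, for each residue class
`ε`, the polynomial identity `2 ∑_{t ≡ ε} a(t) p((x - t)/2) = 2⁻ᵐ p(x)`. Its `(m - j)`-th
derivative at `0` evaluates the combination of the values `p⁽ᵐ⁻ʲ⁾(-t/2)` above, so each parity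
class of the mask contributes half of the `j`-th moment of `υ`. The `j`-th derivatives at `0` of
`υ̂(2ξ) â(ξ) - υ̂(ξ)` and of `υ̂(2ξ) â(ξ + π)` are `(-i)ʲ` times the sum of the two contributions
minus that moment, respectively their difference, so both vanish.
-/

open Complex Polynomial

/-- Symbol (Fourier series) of a scalar sequence. -/
noncomputable def symb (u : ℤ → ℂ) (ξ : ℂ) : ℂ :=
  ∑ᶠ k : ℤ, u k * Complex.exp (-Complex.I * k * ξ)

/-- Entrywise symbol of a matrix-valued sequence. -/
noncomputable def symbM {r : ℕ} (a : ℤ → Fin r → Fin r → ℂ) (i ℓ : Fin r) (ξ : ℂ) : ℂ :=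
  ∑ᶠ k : ℤ, a k i ℓ * Complex.exp (-Complex.I * k * ξ)

/-- Vector subdivision operator on row-vector sequences. -/
noncomputable def sd {r : ℕ} (a : ℤ → Fin r → Fin r → ℂ) (w : ℤ → Fin r → ℂ) :
    ℤ → Fin r → ℂ :=
  fun j ℓ => 2 * ∑ᶠ k : ℤ, ∑ i : Fin r, w k i * a (j - 2 * k) i ℓ

open Finset

theorem eval_zero_iterate_derivative {R : Type*} [CommSemiring R] (q : R[X]) (s : ℕ) :
    (derivative^[s] q).eval 0 = s.factorial * q.coeff s := by
  rw [← coeff_zero_eq_eval_zero, coeff_iterate_derivative, zero_add, Nat.descFactorial_self,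
    nsmul_eq_mul]

theorem eval_zero_iterate_derivative_ne_zero {K : Type*} [Field K] [CharZero K] {p : K[X]}
    {m : ℕ} (hp : p.degree = m) : (derivative^[m] p).eval 0 ≠ 0 := by
  have hp0 : p ≠ 0 := fun h => by simp [h] at hp
  rw [eval_zero_iterate_derivative, ← natDegree_eq_of_degree_eq_some hp]
  exact mul_ne_zero (Nat.cast_ne_zero.mpr (Nat.factorial_ne_zero _)) (leadingCoeff_ne_zero.mpr hp0)

theorem iterate_derivative_comp_C_mul_X_add_C {R : Type*} [CommSemiring R] (p : R[X]) (c b : R)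
    (d : ℕ) : derivative^[d] (p.comp (C c * X + C b)) =
      C (c ^ d) * (derivative^[d] p).comp (C c * X + C b) := by
  induction d with
  | zero => simp
  | succ n ih =>
    rw [Function.iterate_succ_apply', ih, derivative_C_mul, derivative_comp,
      Function.iterate_succ_apply']
    simp only [derivative_add, derivative_C_mul_X, derivative_C, add_zero, pow_succ, C_mul]
    ring

section DerivPairing

variable {R : Type*} [CommRing R]

noncomputable def derivPairing (m : ℕ) (q p : R[X]) : R[X] :=
  ∑ s ∈ range (m + 1), C ((-1) ^ s) * (derivative^[s] q * derivative^[m - s] p)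

theorem derivative_derivPairing {m : ℕ} {q p : R[X]} (hq : q.natDegree ≤ m)
    (hp : p.natDegree ≤ m) : derivative (derivPairing m q p) = 0 := by
  set f : ℕ → R[X] := fun s => C ((-1) ^ s) * (derivative^[s] q * derivative^[m + 1 - s] p)
  have hterm : ∀ s ∈ range (m + 1),
      derivative (C ((-1) ^ s) * (derivative^[s] q * derivative^[m - s] p)) = f s - f (s + 1) := by
    intro s hs
    have hsm : m + 1 - s = m - s + 1 := by simp at hs; omega
    have hsucc : ∀ (n : ℕ) (g : R[X]), derivative (derivative^[n] g) = derivative^[n + 1] g :=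
      fun n g => (Function.iterate_succ_apply' derivative n g).symm
    simp only [f, derivative_mul, derivative_C, zero_mul, zero_add, hsucc, hsm,
      Nat.add_sub_add_right, pow_succ, C_mul, C_neg, C_1]
    ring
  rw [derivPairing, derivative_sum, sum_congr rfl hterm, sum_range_sub']
  simp [f, iterate_derivative_eq_zero (Nat.lt_succ_of_le hq),
    iterate_derivative_eq_zero (Nat.lt_succ_of_le hp)]

theorem eval_derivPairing_eq [IsDomain R] [CharZero R] {m : ℕ} {q p : R[X]}
    (hq : q.natDegree ≤ m) (hp : p.natDegree ≤ m) (x y : R) :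
    (derivPairing m q p).eval x = (derivPairing m q p).eval y := by
  rw [eq_C_of_derivative_eq_zero (derivative_derivPairing hq hp)]
  simp

theorem sum_mul_eval_eq_eval_derivPairing_zero {ι : Type*} (T : Finset ι) (v x : ι → R)
    {m : ℕ} {q p : R[X]} (hq : q.natDegree ≤ m)
    (hv : ∀ s ≤ m,
      ∑ k ∈ T, v k * x k ^ s = (-1) ^ s * s.factorial * (derivative^[m - s] p).eval 0) :
    ∑ k ∈ T, v k * q.eval (x k) = (derivPairing m q p).eval 0 := by
  simp only [eval_eq_sum_range' (Nat.lt_succ_of_le hq), mul_sum, derivPairing, eval_finsetSum,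
    eval_mul, eval_C]
  rw [sum_comm]
  refine sum_congr rfl fun s hs => ?_
  rw [eval_zero_iterate_derivative q]
  simp only [mul_left_comm (v _), ← mul_sum, hv s (Nat.lt_succ_iff.mp (mem_range.mp hs))]
  ring

theorem eval_derivPairing_X_add_C_pow {m j : ℕ} (hj : j ≤ m) (p : R[X]) (b : R) :
    (derivPairing m ((X + C b) ^ j) p).eval (-b) =
      (-1) ^ j * j.factorial * (derivative^[m - j] p).eval (-b) := by
  rw [derivPairing, eval_finsetSum, sum_eq_single_of_mem j (mem_range.mpr (by omega))]
  · simp [iterate_derivative_X_add_pow, Nat.descFactorial_self, mul_assoc]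
  · intro s _ hsj
    rcases lt_or_gt_of_ne hsj with hs | hs
    · simp [iterate_derivative_X_add_pow, zero_pow (Nat.sub_ne_zero_of_lt hs)]
    · simp [iterate_derivative_X_add_pow, Nat.descFactorial_eq_zero_iff_lt.mpr hs]

end DerivPairing

theorem sum_mul_mul_add_pow_eq_eval_iterate_derivative {K : Type*} [Field K] [CharZero K]
    {ι : Type*} (T : Finset ι) (v x : ι → K) {m j : ℕ} (hj : j ≤ m) {p : K[X]}
    (hp : p.natDegree ≤ m)
    (hv : ∀ s ≤ m, ∑ k ∈ T, v k * x k ^ s = (-1) ^ s * s.factorial * (derivative^[m - s] p).eval 0)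
    {c : K} (hc : c ≠ 0) (y : K) :
    ∑ k ∈ T, v k * (c * x k + y) ^ j =
      (-c) ^ j * j.factorial * (derivative^[m - j] p).eval (-(y / c)) := by
  have hq : ((X + C (y / c)) ^ j).natDegree ≤ m :=
    natDegree_pow_le.trans (by rw [natDegree_X_add_C]; omega)
  have hscale : ∀ k ∈ T,
      v k * (c * x k + y) ^ j = c ^ j * (v k * ((X + C (y / c)) ^ j).eval (x k)) := by
    intro k _
    simp only [eval_pow, eval_add, eval_X, eval_C]
    have hfactor : c * x k + y = c * (x k + y / c) := by field_simp
    rw [hfactor, mul_pow]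
    ring
  rw [sum_congr rfl hscale, ← mul_sum, sum_mul_eval_eq_eval_derivPairing_zero T v x hq hv,
    eval_derivPairing_eq hq hp 0 (-(y / c)), eval_derivPairing_X_add_C_pow hj, neg_pow c]
  ring

section Subdivision

variable {r : ℕ} {a : ℤ → Fin r → Fin r → ℂ} {S : Finset ℤ}

theorem sd_eq_sum_filter (hS : Function.support a ⊆ S) (w : ℤ → Fin r → ℂ) (x : ℤ) (ℓ : Fin r) :
    sd a w x ℓ = 2 * ∑ t ∈ S with t % 2 = x % 2, ∑ i, w ((x - t) / 2) i * a t i ℓ := by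
  have hsupp : Function.support (fun k => ∑ i, w k i * a (x - 2 * k) i ℓ) ⊆
      ↑((S.filter fun t => t % 2 = x % 2).image fun t => (x - t) / 2) := by
    intro k hk
    have hne : a (x - 2 * k) ≠ 0 := fun h => hk (by simp [h])
    simp only [coe_image, coe_filter, Set.mem_image, Set.mem_ofPred_eq]
    exact ⟨x - 2 * k, ⟨hS hne, by omega⟩, by omega⟩
  have hinj : Set.InjOn (fun t => (x - t) / 2) ↑(S.filter fun t => t % 2 = x % 2) := by
    intro t ht t' ht' h
    simp only [coe_filter, Set.mem_ofPred_eq] at ht ht' h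
    omega
  rw [sd, finsum_eq_sum_of_support_subset _ hsupp, sum_image hinj]
  congr 1
  refine sum_congr rfl fun t ht => ?_
  have hx : x - 2 * ((x - t) / 2) = t := by
    simp only [mem_filter] at ht
    omega
  rw [hx]

variable {P : Fin r → ℂ[X]} {μ : ℂ}
  (hEig : ∀ (x : ℤ) (ℓ : Fin r), sd a (fun k i => (P i).eval (k : ℂ)) x ℓ = μ * (P ℓ).eval (x : ℂ))
include hEig

theorem sum_mask_comp_eq_of_sd_eq (hS : Function.support a ⊆ S) (x₀ : ℤ) (ℓ : Fin r) :
    C 2 * ∑ t ∈ S with t % 2 = x₀ % 2,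
        ∑ i, C (a t i ℓ) * (P i).comp (C 2⁻¹ * X + C (-((t : ℂ) / 2))) = C μ * P ℓ := by
  apply eq_of_infinite_eval_eq
  refine Set.infinite_of_injective_forall_mem (f := fun y : ℤ => ((x₀ + 2 * y : ℤ) : ℂ))
    (fun y y' h => by simpa using h) fun y => ?_
  simp only [Set.mem_ofPred_eq, eval_mul, eval_C, eval_finsetSum, eval_comp, eval_add, eval_X]
  rw [← hEig, sd_eq_sum_filter hS]
  have hpar : (x₀ + 2 * y) % 2 = x₀ % 2 := by omega
  rw [hpar]
  congr 1
  refine sum_congr rfl fun t ht => sum_congr rfl fun i _ => ?_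
  obtain ⟨c, hc⟩ : ∃ c, x₀ + 2 * y - t = 2 * c := ⟨(x₀ + 2 * y - t) / 2, by
    simp only [mem_filter] at ht
    omega⟩
  have hcast : ((x₀ + 2 * y : ℤ) : ℂ) = 2 * c + t := by
    exact_mod_cast (by omega : x₀ + 2 * y = 2 * c + t)
  rw [hc, Int.mul_ediv_cancel_left c two_ne_zero, hcast, mul_comm]
  congr 2
  ring

theorem sum_mask_eval_iterate_derivative_of_sd_eq (hS : Function.support a ⊆ S) (x₀ : ℤ) (ℓ : Fin r)
    (d : ℕ) :
    2 * (2 ^ d)⁻¹ * ∑ t ∈ S with t % 2 = x₀ % 2,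
        ∑ i, a t i ℓ * (derivative^[d] (P i)).eval (-((t : ℂ) / 2)) =
      μ * (derivative^[d] (P ℓ)).eval 0 := by
  have h := congrArg (fun p => (derivative^[d] p).eval 0) (sum_mask_comp_eq_of_sd_eq hEig hS x₀ ℓ)
  simp only [iterate_derivative_C_mul, iterate_derivative_sum,
    iterate_derivative_comp_C_mul_X_add_C, eval_mul, eval_C, eval_finsetSum, eval_comp, eval_add,
    eval_X, mul_zero, zero_add] at h
  rw [← h, mul_assoc]
  simp only [mul_sum, inv_pow]
  refine sum_congr rfl fun t _ => sum_congr rfl fun i _ => by ring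

end Subdivision

theorem Function.support_apply_subset {α β γ : Type*} [Zero γ] (f : α → β → γ) (b : β) :
    Function.support (fun x => f x b) ⊆ Function.support f :=
  fun _ hx h => hx (by simp [h])

theorem Function.support_apply_apply_subset {α β γ δ : Type*} [Zero δ] (f : α → β → γ → δ) (b : β)
    (c : γ) : Function.support (fun x => f x b c) ⊆ Function.support f :=
  fun _ hx h => hx (by simp [h])

theorem sum_eq_sum_filter_even_add_sum_filter_odd {M : Type*} [AddCommMonoid M] (S : Finset ℤ)
    (f : ℤ → M) :
    ∑ t ∈ S, f t = ∑ t ∈ S with t % 2 = 0 % 2, f t + ∑ t ∈ S with t % 2 = 1 % 2, f t := by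
  rw [← sum_filter_add_sum_filter_not S fun t => t % 2 = 0 % 2]
  congr 1
  exact sum_congr (filter_congr fun t _ => by omega) fun _ _ => rfl

section Symbols

variable {u v : ℤ → ℂ} {T S : Finset ℤ}

theorem symb_eq_sum (hT : Function.support u ⊆ T) (ξ : ℂ) :
    symb u ξ = ∑ k ∈ T, u k * exp (-I * k * ξ) :=
  finsum_eq_sum_of_support_subset _ ((Function.support_mul_subset_left _ _).trans hT)

theorem contDiff_symb (hT : Function.support u ⊆ T) (n : WithTop ℕ∞) : ContDiff ℂ n (symb u) := by
  rw [funext (symb_eq_sum hT)]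
  fun_prop

theorem iteratedDeriv_sum_mul_cexp_zero {ι : Type*} (F : Finset ι) (c μ : ι → ℂ) (j : ℕ) :
    iteratedDeriv j (fun ξ => ∑ t ∈ F, c t * exp (μ t * ξ)) 0 = ∑ t ∈ F, c t * μ t ^ j := by
  rw [iteratedDeriv_fun_sum fun t _ => by fun_prop]
  simp [iteratedDeriv_const_mul_field]

theorem iteratedDeriv_symb_zero (hT : Function.support u ⊆ T) (j : ℕ) :
    iteratedDeriv j (symb u) 0 = (-I) ^ j * ∑ k ∈ T, u k * (k : ℂ) ^ j := by
  rw [funext (symb_eq_sum hT), iteratedDeriv_sum_mul_cexp_zero, mul_sum]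
  exact sum_congr rfl fun k _ => by ring

theorem iteratedDeriv_symb_two_mul_mul_symb_add_zero (hT : Function.support u ⊆ T)
    (hS : Function.support v ⊆ S) (θ : ℂ) (j : ℕ) :
    iteratedDeriv j (fun ξ => symb u (2 * ξ) * symb v (ξ + θ)) 0 =
      (-I) ^ j * ∑ t ∈ S, v t * exp (-I * t * θ) * ∑ k ∈ T, u k * (2 * k + t : ℂ) ^ j := by
  have hprod : (fun ξ => symb u (2 * ξ) * symb v (ξ + θ)) = fun ξ =>
      ∑ p ∈ S ×ˢ T, v p.1 * exp (-I * p.1 * θ) * u p.2 * exp (-I * (2 * p.2 + p.1) * ξ) := by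
    funext ξ
    rw [symb_eq_sum hT, symb_eq_sum hS, sum_mul_sum, sum_product, sum_comm]
    refine sum_congr rfl fun t _ => sum_congr rfl fun k _ => ?_
    rw [show -I * t * (ξ + θ) = -I * t * θ + -I * t * ξ by ring,
      show -I * (2 * k + t) * ξ = -I * k * (2 * ξ) + -I * t * ξ by ring, exp_add, exp_add]
    ring
  rw [hprod, iteratedDeriv_sum_mul_cexp_zero, sum_product, mul_sum]
  refine sum_congr rfl fun t _ => ?_
  rw [mul_sum, mul_sum]
  exact sum_congr rfl fun k _ => by rw [mul_pow]; ring

theorem contDiff_symb_two_mul_mul_symb_add (hT : Function.support u ⊆ T)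
    (hS : Function.support v ⊆ S) (θ : ℂ) (n : WithTop ℕ∞) :
    ContDiff ℂ n fun ξ => symb u (2 * ξ) * symb v (ξ + θ) := by
  have := contDiff_symb hT n
  have := contDiff_symb hS n
  fun_prop

theorem sum_mul_pow_eq_of_iteratedDeriv_symb_zero (hT : Function.support u ⊆ T) {s : ℕ} {c : ℂ}
    (h : iteratedDeriv s (symb u) 0 = s.factorial * I ^ s * c) :
    ∑ k ∈ T, u k * (k : ℂ) ^ s = (-1) ^ s * s.factorial * c := by
  rw [iteratedDeriv_symb_zero hT, neg_pow] at h
  have hsign : ((-1 : ℂ) ^ s) * (-1) ^ s = 1 := by rw [← mul_pow]; norm_num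
  apply mul_left_cancel₀ (pow_ne_zero s I_ne_zero)
  linear_combination (-1 : ℂ) ^ s * h - I ^ s * (∑ k ∈ T, u k * (k : ℂ) ^ s) * hsign

theorem cexp_neg_I_mul_int_mul_pi (t : ℤ) : exp (-I * t * Real.pi) = (-1) ^ t := by
  rw [show -I * t * Real.pi = t * -(Real.pi * I) by ring, exp_int_mul, exp_neg, exp_pi_mul_I]
  norm_num

theorem sum_cexp_neg_I_mul_int_mul_pi_mul (S : Finset ℤ) (f : ℤ → ℂ) :
    ∑ t ∈ S, exp (-I * t * Real.pi) * f t =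
      ∑ t ∈ S with t % 2 = 0 % 2, f t - ∑ t ∈ S with t % 2 = 1 % 2, f t := by
  rw [sum_eq_sum_filter_even_add_sum_filter_odd, sub_eq_add_neg, ← sum_neg_distrib]
  congr 1 <;> refine sum_congr rfl fun t ht => ?_ <;> rw [cexp_neg_I_mul_int_mul_pi] <;>
    have ht := (mem_filter.mp ht).2
  · rw [Even.neg_one_zpow (Int.even_iff.mpr ht), one_mul]
  · rw [Odd.neg_one_zpow (Int.odd_iff.mpr ht), neg_one_mul]

theorem symbM_eq_symb {r : ℕ} (a : ℤ → Fin r → Fin r → ℂ) (i ℓ : Fin r) :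
    symbM a i ℓ = symb fun k => a k i ℓ :=
  rfl

theorem contDiff_sum_symb_two_mul_mul_symbM_add {r : ℕ} {υ : ℤ → Fin r → ℂ}
    {a : ℤ → Fin r → Fin r → ℂ} (hT : Function.support υ ⊆ T) (hS : Function.support a ⊆ S)
    (θ : ℂ) (n : WithTop ℕ∞) (ℓ : Fin r) :
    ContDiff ℂ n fun ξ => ∑ i, symb (fun k => υ k i) (2 * ξ) * symbM a i ℓ (ξ + θ) :=
  ContDiff.sum fun i _ => contDiff_symb_two_mul_mul_symb_add
    ((Function.support_apply_subset υ i).trans hT)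
    ((Function.support_apply_apply_subset a i ℓ).trans hS) θ n

theorem iteratedDeriv_sum_symb_two_mul_mul_symbM_add_zero {r : ℕ} {υ : ℤ → Fin r → ℂ}
    {a : ℤ → Fin r → Fin r → ℂ} (hT : Function.support υ ⊆ T) (hS : Function.support a ⊆ S)
    (θ : ℂ) (j : ℕ) (ℓ : Fin r) :
    iteratedDeriv j (fun ξ => ∑ i, symb (fun k => υ k i) (2 * ξ) * symbM a i ℓ (ξ + θ)) 0 =
      (-I) ^ j * ∑ t ∈ S, exp (-I * t * θ) *
        ∑ i, a t i ℓ * ∑ k ∈ T, υ k i * (2 * k + t : ℂ) ^ j := by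
  have hυi := fun i => (Function.support_apply_subset υ i).trans hT
  have hai := fun i => (Function.support_apply_apply_subset a i ℓ).trans hS
  simp only [symbM_eq_symb]
  rw [iteratedDeriv_fun_sum fun i _ =>
    (contDiff_symb_two_mul_mul_symb_add (hυi i) (hai i) θ j).contDiffAt]
  simp only [iteratedDeriv_symb_two_mul_mul_symb_add_zero (hυi _) (hai _), mul_sum]
  rw [sum_comm]
  exact sum_congr rfl fun t _ => sum_congr rfl fun i _ => sum_congr rfl fun k _ => by ring

end Symbols

section SumRules

variable {r m : ℕ} {a : ℤ → Fin r → Fin r → ℂ} {P : Fin r → ℂ[X]} {υ : ℤ → Fin r → ℂ}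
  {S T : Finset ℤ} (hS : Function.support a ⊆ S) (hP : ∀ i, (P i).natDegree ≤ m)
  (hEig : ∀ (x : ℤ) (ℓ : Fin r),
    sd a (fun k i => (P i).eval (k : ℂ)) x ℓ = ((2 : ℂ) ^ m)⁻¹ * (P ℓ).eval (x : ℂ))
  (hυ : ∀ s ≤ m, ∀ i, ∑ k ∈ T, υ k i * (k : ℂ) ^ s =
    (-1) ^ s * s.factorial * (derivative^[m - s] (P i)).eval 0)
include hS hP hEig hυ

theorem sum_parity_class_mask_moment_eq_half {j : ℕ} (hj : j ≤ m) (x₀ : ℤ) (ℓ : Fin r) :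
    ∑ t ∈ S with t % 2 = x₀ % 2, ∑ i, a t i ℓ * ∑ k ∈ T, υ k i * (2 * k + t : ℂ) ^ j =
      (∑ k ∈ T, υ k ℓ * (k : ℂ) ^ j) / 2 := by
  have hυshift : ∀ (t : ℤ) i, ∑ k ∈ T, υ k i * (2 * k + t : ℂ) ^ j =
      (-2) ^ j * j.factorial * (derivative^[m - j] (P i)).eval (-((t : ℂ) / 2)) :=
    fun t i => sum_mul_mul_add_pow_eq_eval_iterate_derivative T (fun k => υ k i) (fun k => (k : ℂ))
      hj (hP i) (fun s hs => hυ s hs i) two_ne_zero t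
  have hmask := sum_mask_eval_iterate_derivative_of_sd_eq hEig hS x₀ ℓ (m - j)
  simp only [hυshift, mul_left_comm (a _ _ ℓ), ← mul_sum]
  rw [hυ j hj ℓ]
  set A := ∑ t ∈ S with t % 2 = x₀ % 2,
    ∑ i, a t i ℓ * (derivative^[m - j] (P i)).eval (-((t : ℂ) / 2))
  set D := (derivative^[m - j] (P ℓ)).eval 0
  have hD : D = 2 * 2 ^ j * A := by
    rw [← pow_mul_pow_sub 2 hj] at hmask
    field_simp at hmask
    linear_combination -hmask
  rw [hD, neg_pow]
  ring

theorem iteratedDeriv_sum_rule_eq_zero (hT : Function.support υ ⊆ T) {j : ℕ} (hj : j ≤ m)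
    (ℓ : Fin r) :
    iteratedDeriv j (fun ξ => (∑ i, symb (fun k => υ k i) (2 * ξ) * symbM a i ℓ ξ) -
      symb (fun k => υ k ℓ) ξ) 0 = 0 := by
  have hυℓ := (Function.support_apply_subset υ ℓ).trans hT
  have hhalf := sum_parity_class_mask_moment_eq_half hS hP hEig hυ hj (ℓ := ℓ)
  have hrefine := iteratedDeriv_sum_symb_two_mul_mul_symbM_add_zero hT hS 0 j ℓ
  have hsmooth := contDiff_sum_symb_two_mul_mul_symbM_add hT hS 0 j ℓ
  simp only [add_zero, mul_zero, exp_zero, one_mul] at hrefine hsmooth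
  rw [iteratedDeriv_fun_sub hsmooth.contDiffAt (contDiff_symb hυℓ j).contDiffAt, hrefine,
    iteratedDeriv_symb_zero hυℓ, sum_eq_sum_filter_even_add_sum_filter_odd, hhalf, hhalf]
  ring

theorem iteratedDeriv_sum_rule_add_pi_eq_zero (hT : Function.support υ ⊆ T) {j : ℕ} (hj : j ≤ m)
    (ℓ : Fin r) :
    iteratedDeriv j (fun ξ => ∑ i, symb (fun k => υ k i) (2 * ξ) *
      symbM a i ℓ (ξ + (Real.pi : ℂ))) 0 = 0 := by
  have hhalf := sum_parity_class_mask_moment_eq_half hS hP hEig hυ hj (ℓ := ℓ)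
  rw [iteratedDeriv_sum_symb_two_mul_mul_symbM_add_zero hT hS, sum_cexp_neg_I_mul_int_mul_pi_mul,
    hhalf, hhalf, sub_self, mul_zero]

end SumRules

/-- if `S_a p⃗_m = 2^{-m} p⃗_m` for some vector polynomial `p⃗_m` of exact
degree `m`, then `a` has order `m+1` sum rules with respect to any finitely supported `υ`
with `υ̂^{(j)}(0) = j! i^j p⃗_m^{(m−j)}(0)` for `j = 0,…,m`; in particular
`υ̂(0) = p⃗_m^{(m)}(0) ≠ 0`. -/
theorem stmt9 (r m : ℕ) (a : ℤ → Fin r → Fin r → ℂ)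
    (ha : (Function.support a).Finite)
    (P : Fin r → Polynomial ℂ)
    (hPdeg : ∀ ℓ, (P ℓ).degree ≤ (m : ℕ)) (hPex : ∃ ℓ, (P ℓ).degree = (m : ℕ))
    (hEig : ∀ x : ℤ, ∀ ℓ : Fin r,
      sd a (fun k i => (P i).eval ((k : ℂ))) x ℓ = ((2 : ℂ) ^ m)⁻¹ * (P ℓ).eval ((x : ℂ))) :
    ∀ υ : ℤ → Fin r → ℂ, (Function.support υ).Finite →
      (∀ j ≤ m, ∀ ℓ : Fin r,
        iteratedDeriv j (symb (fun k => υ k ℓ)) 0 =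
          (Nat.factorial j : ℂ) * Complex.I ^ j *
            (Polynomial.derivative^[m - j] (P ℓ)).eval 0) →
      ((∀ ℓ : Fin r, symb (fun k => υ k ℓ) 0 =
          (Polynomial.derivative^[m] (P ℓ)).eval 0) ∧
        (fun ℓ => symb (fun k => υ k ℓ) 0) ≠ 0 ∧
        (∀ j ≤ m, ∀ ℓ : Fin r,
          iteratedDeriv j
            (fun ξ : ℂ => (∑ i : Fin r, symb (fun k => υ k i) (2 * ξ) * symbM a i ℓ ξ) -
              symb (fun k => υ k ℓ) ξ) 0 = 0) ∧
        (∀ j ≤ m, ∀ ℓ : Fin r,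
          iteratedDeriv j
            (fun ξ : ℂ => ∑ i : Fin r, symb (fun k => υ k i) (2 * ξ) *
              symbM a i ℓ (ξ + (Real.pi : ℂ))) 0 = 0)) := by
  intro υ hυ hmom
  have hT : Function.support υ ⊆ hυ.toFinset := hυ.coe_toFinset.symm.subset
  have hS : Function.support a ⊆ ha.toFinset := ha.coe_toFinset.symm.subset
  have hP : ∀ i, (P i).natDegree ≤ m := fun i => natDegree_le_iff_degree_le.mpr (hPdeg i)
  have hmoment : ∀ s ≤ m, ∀ i, ∑ k ∈ hυ.toFinset, υ k i * (k : ℂ) ^ s =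
      (-1) ^ s * s.factorial * (derivative^[m - s] (P i)).eval 0 := fun s hs i =>
    sum_mul_pow_eq_of_iteratedDeriv_symb_zero
      ((Function.support_apply_subset υ i).trans hT) (hmom s hs i)
  have hsymb_zero : ∀ ℓ, symb (fun k => υ k ℓ) 0 = (derivative^[m] (P ℓ)).eval 0 := fun ℓ => by
    simpa using hmom 0 m.zero_le ℓ
  obtain ⟨ℓ₀, hℓ₀⟩ := hPex
  exact ⟨hsymb_zero,
    fun h => eval_zero_iterate_derivative_ne_zero hℓ₀ ((hsymb_zero ℓ₀).symm.trans (congrFun h ℓ₀)),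
    fun j hj ℓ => iteratedDeriv_sum_rule_eq_zero hS hP hEig hmoment hT hj ℓ,
    fun j hj ℓ => iteratedDeriv_sum_rule_add_pi_eq_zero hS hP hEig hmoment hT hj ℓ⟩
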